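/- Suppose lim_{x→a⁺} s(x) = ∞, μ extends continuously to x = a with a finite value μ(a), and the left boundary a is natural in the sense that ∫_a^{x₀} M[a,v] s(v) dv = ∞ (so ξ(w) → −∞ as w → a⁺). Then for any fixed y₀ ∈ (a,b): lim_{w→a⁺} (y₀ − w)/(ξ(y₀) − ξ(w)) = 0, lim_{w→a⁺} w/ξ(w) = 0, and (y − w)/(ξ(y) − ξ(w)) → 0 as (w,y) → (a,a) with a < w < y. -/

import Mathlib

open MeasureTheory Filter Set Topology
open scoped Classical

noncomputable section

/-- The state interval `(a, b)` where `a` is real and `b ∈ (a, ∞]`. -/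
def stInt (a : ℝ) (b : EReal) : Set ℝ := {x : ℝ | a < x ∧ (x : EReal) < b}

/-- The filter of approach to the right endpoint `b ∈ (a, ∞]`:
`atTop` when `b = ∞`, and the left-neighborhood filter of `b` otherwise. -/
def atB (b : EReal) : Filter ℝ :=
  if b = ⊤ then Filter.atTop else nhdsWithin b.toReal (Set.Iio b.toReal)

/-- The scale density `s(x) = exp(-∫_{x₀}^x 2μ/σ²)`. -/
def sDen (μ σ : ℝ → ℝ) (x₀ x : ℝ) : ℝ :=
  Real.exp (-(∫ y in x₀..x, 2 * μ y / (σ y) ^ 2))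

/-- The speed density `m(x) = 2/(σ(x)² s(x))`. -/
def mDen (μ σ : ℝ → ℝ) (x₀ x : ℝ) : ℝ :=
  2 / ((σ x) ^ 2 * sDen μ σ x₀ x)

/-- `M[a,x] = ∫_a^x m(u) du`. -/
def Mab (μ σ : ℝ → ℝ) (x₀ a x : ℝ) : ℝ :=
  ∫ u in Set.Ioo a x, mDen μ σ x₀ u

/-- The time potential `ξ(x) = ∫_{x₀}^x M[a,v] s(v) dv`. -/
def xiF (μ σ : ℝ → ℝ) (x₀ a x : ℝ) : ℝ :=
  ∫ v in x₀..x, Mab μ σ x₀ a v * sDen μ σ x₀ v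

/-- The running reward potential `g(x) = ∫_{x₀}^x (∫_a^v c(u) m(u) du) s(v) dv`. -/
def gF (μ σ c : ℝ → ℝ) (x₀ a x : ℝ) : ℝ :=
  ∫ v in x₀..x, (∫ u in Set.Ioo a v, c u * mDen μ σ x₀ u) * sDen μ σ x₀ v

/-- `h(x) = (∫_a^x (γ c(u) + p μ(u)) m(u) du) / M[a,x]`. -/
def hF (μ σ c : ℝ → ℝ) (x₀ a p γ x : ℝ) : ℝ :=
  (∫ u in Set.Ioo a x, (γ * c u + p * μ u) * mDen μ σ x₀ u) / Mab μ σ x₀ a x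

/-- The long-term average reward `F(w,y)` of the `(w,y)`-impulse policy. -/
def FF (μ σ c : ℝ → ℝ) (x₀ a p K γ w y : ℝ) : ℝ :=
  (p * (y - w) - K + γ * (gF μ σ c x₀ a y - gF μ σ c x₀ a w)) /
    (xiF μ σ x₀ a y - xiF μ σ x₀ a w)

/-- `c̄(b)`: equals `⟨c,π⟩` when `M[a,b] < ∞` and the boundary value `c(b)` otherwise. -/
def cbar (μ σ c : ℝ → ℝ) (x₀ a : ℝ) (b : EReal) (cb : ℝ) : ℝ :=
  if MeasureTheory.IntegrableOn (mDen μ σ x₀) (stInt a b) MeasureTheory.volume then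
    (∫ u in stInt a b, c u * mDen μ σ x₀ u) / (∫ u in stInt a b, mDen μ σ x₀ u)
  else cb

/-!
Write `S = 1/s`, so that `S' = μ m` and `M' = m`. Both `S` and `M` vanish at `a⁺`, so by
l'Hôpital `1/(M s) = S/M → μ(a)`. If `μ(a) ≠ 0` then `ξ' = M s` stays bounded near `a`, which
contradicts `ξ → -∞`; hence `μ(a) = 0` and `ξ' = M s → ∞`. By the mean value theorem
`(y - w)/(ξ(y) - ξ(w)) = 1/ξ'(c)` for some `c ∈ (w, y)`, which gives the double limit; the two
one-variable limits only need `ξ(w) → -∞`.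
-/

section RealAnalysis

variable {f f' : ℝ → ℝ} {a : ℝ}

theorem hasDerivAt_integral_of_continuousOn {U : Set ℝ} {x₀ x : ℝ} (hU : IsOpen U)
    (hUc : U.OrdConnected) (hf : ContinuousOn f U) (hx₀ : x₀ ∈ U) (hx : x ∈ U) :
    HasDerivAt (fun x => ∫ y in x₀..x, f y) (f x) x :=
  intervalIntegral.integral_hasDerivAt_right
    ((hf.mono (hUc.uIcc_subset hx₀ hx)).intervalIntegrable)
    (hf.stronglyMeasurableAtFilter hU x hx) (hf.continuousAt (hU.mem_nhds hx))

theorem exists_hasDerivAt_eq_slope_of_forall_Icc {w y : ℝ} (hwy : w < y)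
    (hf : ∀ x ∈ Icc w y, HasDerivAt f (f' x) x) :
    ∃ c ∈ Ioo w y, f' c = (f y - f w) / (y - w) :=
  exists_hasDerivAt_eq_slope f f' hwy (fun x hx => (hf x hx).continuousAt.continuousWithinAt)
    fun x hx => hf x (Ioo_subset_Icc_self hx)

theorem tendsto_sub_div_sub_of_deriv_tendsto_atTop
    (hf : ∀ᶠ x in 𝓝[>] a, HasDerivAt f (f' x) x) (hf' : Tendsto f' (𝓝[>] a) atTop) :
    Tendsto (fun q : ℝ × ℝ => (q.2 - q.1) / (f q.2 - f q.1))
      ((𝓝[>] a ×ˢ 𝓝[>] a) ⊓ 𝓟 {q | q.1 < q.2}) (𝓝 0) := by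
  intro V hV
  obtain ⟨u, hau, hu⟩ := mem_nhdsGT_iff_exists_Ioo_subset.1
    (hf.and ((tendsto_inv_atTop_zero.comp hf') hV))
  refine mem_inf_of_inter (prod_mem_prod (Ioo_mem_nhdsGT hau) (Ioo_mem_nhdsGT hau))
    (mem_principal_self _) ?_
  rintro ⟨w, y⟩ ⟨⟨hw, hy⟩, hwy : w < y⟩
  have hsub : Icc w y ⊆ Ioo a u := Icc_subset_Ioo hw.1 hy.2
  obtain ⟨c, hc, hslope⟩ :=
    exists_hasDerivAt_eq_slope_of_forall_Icc hwy fun x hx => (hu (hsub hx)).1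
  show (y - w) / (f y - f w) ∈ V
  rw [← inv_div, ← hslope]
  exact (hu (hsub (Ioo_subset_Icc_self hc))).2

theorem not_tendsto_atBot_of_deriv_isBoundedUnder
    (hf : ∀ᶠ x in 𝓝[>] a, HasDerivAt f (f' x) x) (hbdd : IsBoundedUnder (· ≤ ·) (𝓝[>] a) f') :
    ¬ Tendsto f (𝓝[>] a) atBot := by
  intro hbot
  obtain ⟨B, hB⟩ := hbdd
  obtain ⟨u, hau, hu⟩ := mem_nhdsGT_iff_exists_Ioo_subset.1 (hf.and (eventually_map.1 hB))
  obtain ⟨x, hxu, hx⟩ := exists_between (mem_Ioi.1 hau)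
  suffices hlow : ∀ w ∈ Ioo a x, f x - |B| * (x - a) ≤ f w by
    obtain ⟨w, hw, hwlow⟩ := ((hbot.eventually (eventually_lt_atBot (f x - |B| * (x - a)))).and
      (Ioo_mem_nhdsGT hxu)).exists
    exact (hlow w hwlow).not_gt hw
  intro w hw
  have hsub : Icc w x ⊆ Ioo a u := Icc_subset_Ioo hw.1 hx
  obtain ⟨c, hc, hslope⟩ :=
    exists_hasDerivAt_eq_slope_of_forall_Icc hw.2 fun y hy => (hu (hsub hy)).1
  have hwx : 0 < x - w := sub_pos.2 hw.2
  have hdiff : f x - f w = f' c * (x - w) := by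
    rw [hslope, div_mul_cancel₀ _ hwx.ne']
  have hfc : f' c ≤ |B| := ((hu (hsub (Ioo_subset_Icc_self hc))).2).trans (le_abs_self B)
  nlinarith [abs_nonneg B, hw.1]

theorem tendsto_atTop_of_inv_tendsto {l : Filter ℝ} {g : ℝ → ℝ} {L : ℝ}
    (hpos : ∀ᶠ x in l, 0 < g x) (hinv : Tendsto (fun x => (g x)⁻¹) l (𝓝 L))
    (hunbdd : ¬ IsBoundedUnder (· ≤ ·) l g) : Tendsto g l atTop := by
  rcases eq_or_ne L 0 with rfl | hL
  · have hinv' : Tendsto (fun x => (g x)⁻¹) l (𝓝[>] 0) :=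
      tendsto_nhdsWithin_iff.2 ⟨hinv, hpos.mono fun x hx => inv_pos.2 hx⟩
    simpa only [Function.comp_def, inv_inv] using tendsto_inv_nhdsGT_zero.comp hinv'
  · refine absurd ?_ hunbdd
    simpa only [inv_inv] using (hinv.inv₀ hL).isBoundedUnder_le

end RealAnalysis

section Diffusion

variable {a : ℝ} {b : EReal} {μ σ : ℝ → ℝ} {x₀ x : ℝ}

theorem isOpen_stInt : IsOpen (stInt a b) :=
  isOpen_Ioi.inter (isOpen_Iio.preimage continuous_coe_real_ereal)

theorem ordConnected_stInt : (stInt a b).OrdConnected :=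
  ⟨fun _ hx _ hy _ hz => ⟨hx.1.trans_le hz.1, (EReal.coe_le_coe_iff.2 hz.2).trans_lt hy.2⟩⟩

theorem Ioo_subset_stInt (hx : x ∈ stInt a b) : Ioo a x ⊆ stInt a b :=
  fun _ hy => ⟨hy.1, (EReal.coe_lt_coe_iff.2 hy.2).trans hx.2⟩

theorem stInt_mem_nhdsGT (hx₀ : x₀ ∈ stInt a b) : stInt a b ∈ 𝓝[>] a :=
  mem_of_superset (Ioo_mem_nhdsGT hx₀.1) (Ioo_subset_stInt hx₀)

theorem sDen_pos : 0 < sDen μ σ x₀ x := Real.exp_pos _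

theorem mDen_pos (hσ : 0 < σ x ^ 2) : 0 < mDen μ σ x₀ x :=
  div_pos two_pos (mul_pos hσ sDen_pos)

theorem hasDerivAt_drift_integral (hx₀ : x₀ ∈ stInt a b) (hμcont : ContinuousOn μ (stInt a b))
    (hσcont : ContinuousOn σ (stInt a b)) (hσpos : ∀ x ∈ stInt a b, 0 < σ x ^ 2)
    (hx : x ∈ stInt a b) :
    HasDerivAt (fun x => ∫ y in x₀..x, 2 * μ y / σ y ^ 2) (2 * μ x / σ x ^ 2) x :=
  hasDerivAt_integral_of_continuousOn isOpen_stInt ordConnected_stInt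
    ((continuousOn_const.mul hμcont).div (hσcont.pow 2) fun y hy => (hσpos y hy).ne') hx₀ hx

theorem continuousOn_sDen (hx₀ : x₀ ∈ stInt a b) (hμcont : ContinuousOn μ (stInt a b))
    (hσcont : ContinuousOn σ (stInt a b)) (hσpos : ∀ x ∈ stInt a b, 0 < σ x ^ 2) :
    ContinuousOn (sDen μ σ x₀) (stInt a b) := fun _ hx =>
  (hasDerivAt_drift_integral hx₀ hμcont hσcont hσpos hx).neg.exp.continuousAt.continuousWithinAt

theorem hasDerivAt_inv_sDen (hx₀ : x₀ ∈ stInt a b) (hμcont : ContinuousOn μ (stInt a b))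
    (hσcont : ContinuousOn σ (stInt a b)) (hσpos : ∀ x ∈ stInt a b, 0 < σ x ^ 2)
    (hx : x ∈ stInt a b) :
    HasDerivAt (fun x => (sDen μ σ x₀ x)⁻¹) (μ x * mDen μ σ x₀ x) x := by
  convert (hasDerivAt_drift_integral hx₀ hμcont hσcont hσpos hx).exp using 1
  · simp only [sDen, Real.exp_neg, inv_inv]
  · simp only [mDen, sDen, Real.exp_neg]
    field_simp

theorem continuousOn_mDen (hx₀ : x₀ ∈ stInt a b) (hμcont : ContinuousOn μ (stInt a b))
    (hσcont : ContinuousOn σ (stInt a b)) (hσpos : ∀ x ∈ stInt a b, 0 < σ x ^ 2) :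
    ContinuousOn (mDen μ σ x₀) (stInt a b) :=
  continuousOn_const.div ((hσcont.pow 2).mul (continuousOn_sDen hx₀ hμcont hσcont hσpos))
    fun y hy => (mul_pos (hσpos y hy) sDen_pos).ne'

theorem Mab_eq_intervalIntegral (hx : a ≤ x) :
    Mab μ σ x₀ a x = ∫ u in a..x, mDen μ σ x₀ u := by
  rw [intervalIntegral.integral_of_le hx, integral_Ioc_eq_integral_Ioo]
  rfl

theorem Mab_pos (hσpos : ∀ x ∈ stInt a b, 0 < σ x ^ 2)
    (hMfin : ∀ x ∈ stInt a b, IntegrableOn (mDen μ σ x₀) (Ioo a x)) (hx : x ∈ stInt a b) :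
    0 < Mab μ σ x₀ a x := by
  rw [Mab_eq_intervalIntegral hx.1.le]
  exact intervalIntegral.intervalIntegral_pos_of_pos_on
    ((intervalIntegrable_iff_integrableOn_Ioo_of_le hx.1.le).2 (hMfin x hx))
    (fun y hy => mDen_pos (hσpos y (Ioo_subset_stInt hx hy))) hx.1

theorem tendsto_Mab_nhdsGT (hx₀ : x₀ ∈ stInt a b)
    (hMfin : ∀ x ∈ stInt a b, IntegrableOn (mDen μ σ x₀) (Ioo a x)) :
    Tendsto (Mab μ σ x₀ a) (𝓝[>] a) (𝓝 0) := by
  have hint : IntegrableOn (mDen μ σ x₀) (uIcc a x₀) := by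
    rw [uIcc_of_le hx₀.1.le, integrableOn_Icc_iff_integrableOn_Ioo]
    exact hMfin x₀ hx₀
  have hprim : Tendsto (fun x => ∫ u in a..x, mDen μ σ x₀ u) (𝓝[>] a) (𝓝 0) := by
    rw [← nhdsWithin_Ioo_eq_nhdsGT hx₀.1]
    have hcont := intervalIntegral.continuousOn_primitive_interval hint a left_mem_uIcc
    simpa only [intervalIntegral.integral_same] using
      hcont.tendsto.mono_left (nhdsWithin_mono _ (uIcc_of_le hx₀.1.le ▸ Ioo_subset_Icc_self))
  exact hprim.congr' (eventually_nhdsWithin_of_forall fun x hx =>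
    (Mab_eq_intervalIntegral (le_of_lt hx)).symm)

theorem hasDerivAt_Mab (hx₀ : x₀ ∈ stInt a b) (hμcont : ContinuousOn μ (stInt a b))
    (hσcont : ContinuousOn σ (stInt a b)) (hσpos : ∀ x ∈ stInt a b, 0 < σ x ^ 2)
    (hMfin : ∀ x ∈ stInt a b, IntegrableOn (mDen μ σ x₀) (Ioo a x)) (hx : x ∈ stInt a b) :
    HasDerivAt (Mab μ σ x₀ a) (mDen μ σ x₀ x) x := by
  have hm := continuousOn_mDen hx₀ hμcont hσcont hσpos
  have hprim : HasDerivAt (fun x => ∫ u in a..x, mDen μ σ x₀ u) (mDen μ σ x₀ x) x :=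
    intervalIntegral.integral_hasDerivAt_right
      ((intervalIntegrable_iff_integrableOn_Ioo_of_le hx.1.le).2 (hMfin x hx))
      (hm.stronglyMeasurableAtFilter isOpen_stInt x hx)
      (hm.continuousAt (isOpen_stInt.mem_nhds hx))
  exact hprim.congr_of_eventuallyEq
    ((eventually_gt_nhds hx.1).mono fun y hy => Mab_eq_intervalIntegral hy.le)

theorem hasDerivAt_xiF (hx₀ : x₀ ∈ stInt a b) (hμcont : ContinuousOn μ (stInt a b))
    (hσcont : ContinuousOn σ (stInt a b)) (hσpos : ∀ x ∈ stInt a b, 0 < σ x ^ 2)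
    (hMfin : ∀ x ∈ stInt a b, IntegrableOn (mDen μ σ x₀) (Ioo a x)) (hx : x ∈ stInt a b) :
    HasDerivAt (xiF μ σ x₀ a) (Mab μ σ x₀ a x * sDen μ σ x₀ x) x :=
  hasDerivAt_integral_of_continuousOn isOpen_stInt ordConnected_stInt
    (ContinuousOn.mul (fun _ hy =>
        (hasDerivAt_Mab hx₀ hμcont hσcont hσpos hMfin hy).continuousAt.continuousWithinAt)
      (continuousOn_sDen hx₀ hμcont hσcont hσpos)) hx₀ hx

theorem tendsto_inv_sDen_div_Mab (hx₀ : x₀ ∈ stInt a b) (hμcont : ContinuousOn μ (stInt a b))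
    (hσcont : ContinuousOn σ (stInt a b)) (hσpos : ∀ x ∈ stInt a b, 0 < σ x ^ 2)
    (hMfin : ∀ x ∈ stInt a b, IntegrableOn (mDen μ σ x₀) (Ioo a x))
    (hsa : Tendsto (sDen μ σ x₀) (𝓝[>] a) atTop) {μa : ℝ} (hμa : Tendsto μ (𝓝[>] a) (𝓝 μa)) :
    Tendsto (fun x => (sDen μ σ x₀ x)⁻¹ / Mab μ σ x₀ a x) (𝓝[>] a) (𝓝 μa) := by
  have hI := stInt_mem_nhdsGT hx₀
  refine HasDerivAt.lhopital_zero_nhdsGT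
    (mem_of_superset hI fun x hx => hasDerivAt_inv_sDen hx₀ hμcont hσcont hσpos hx)
    (mem_of_superset hI fun x hx => hasDerivAt_Mab hx₀ hμcont hσcont hσpos hMfin hx)
    (mem_of_superset hI fun x hx => (mDen_pos (hσpos x hx)).ne')
    (tendsto_inv_atTop_zero.comp hsa) (tendsto_Mab_nhdsGT hx₀ hMfin)
    (hμa.congr' (mem_of_superset hI fun x hx => ?_))
  exact (mul_div_cancel_right₀ _ (mDen_pos (hσpos x hx)).ne').symm

theorem tendsto_Mab_mul_sDen_atTop (hx₀ : x₀ ∈ stInt a b) (hμcont : ContinuousOn μ (stInt a b))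
    (hσcont : ContinuousOn σ (stInt a b)) (hσpos : ∀ x ∈ stInt a b, 0 < σ x ^ 2)
    (hMfin : ∀ x ∈ stInt a b, IntegrableOn (mDen μ σ x₀) (Ioo a x))
    (hsa : Tendsto (sDen μ σ x₀) (𝓝[>] a) atTop) {μa : ℝ} (hμa : Tendsto μ (𝓝[>] a) (𝓝 μa))
    (hanat : Tendsto (xiF μ σ x₀ a) (𝓝[>] a) atBot) :
    Tendsto (fun x => Mab μ σ x₀ a x * sDen μ σ x₀ x) (𝓝[>] a) atTop := by
  have hI := stInt_mem_nhdsGT hx₀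
  refine tendsto_atTop_of_inv_tendsto (L := μa)
    (mem_of_superset hI fun x hx => mul_pos (Mab_pos hσpos hMfin hx) sDen_pos) ?_
    fun hbdd => not_tendsto_atBot_of_deriv_isBoundedUnder
      (mem_of_superset hI fun x hx => hasDerivAt_xiF hx₀ hμcont hσcont hσpos hMfin hx) hbdd hanat
  simpa only [mul_inv, div_eq_mul_inv, mul_comm] using
    tendsto_inv_sDen_div_Mab hx₀ hμcont hσcont hσpos hMfin hsa hμa

end Diffusion

theorem statement7_general    (a : ℝ) (b : EReal)
    (μ σ : ℝ → ℝ) (x₀ : ℝ) (hx₀ : x₀ ∈ stInt a b)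
    (hμcont : ContinuousOn μ (stInt a b)) (hσcont : ContinuousOn σ (stInt a b))
    (hσpos : ∀ x ∈ stInt a b, 0 < (σ x) ^ 2)
    (hMfin : ∀ x ∈ stInt a b, IntegrableOn (mDen μ σ x₀) (Set.Ioo a x))
    (hsa : Tendsto (sDen μ σ x₀) (𝓝[>] a) atTop)
    (μa : ℝ) (hμa : Tendsto μ (𝓝[>] a) (𝓝 μa))
    (hanat : Tendsto (xiF μ σ x₀ a) (𝓝[>] a) atBot)
    :
    (∀ y₀ ∈ stInt a b,
      Tendsto (fun w => (y₀ - w) / (xiF μ σ x₀ a y₀ - xiF μ σ x₀ a w)) (𝓝[>] a) (𝓝 0)) ∧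
    Tendsto (fun w => w / xiF μ σ x₀ a w) (𝓝[>] a) (𝓝 0) ∧
    Tendsto (fun q : ℝ × ℝ => (q.2 - q.1) / (xiF μ σ x₀ a q.2 - xiF μ σ x₀ a q.1))
      (((𝓝[>] a) ×ˢ (𝓝[>] a)) ⊓ 𝓟 {q : ℝ × ℝ | q.1 < q.2 ∧ (q.2 : EReal) < b}) (𝓝 0) := by
  have hξ : ∀ᶠ x in 𝓝[>] a, HasDerivAt (xiF μ σ x₀ a) (Mab μ σ x₀ a x * sDen μ σ x₀ x) x :=
    mem_of_superset (stInt_mem_nhdsGT hx₀) fun x hx =>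
      hasDerivAt_xiF hx₀ hμcont hσcont hσpos hMfin hx
  have hnegξ : Tendsto (fun w => -xiF μ σ x₀ a w) (𝓝[>] a) atTop :=
    tendsto_neg_atBot_atTop.comp hanat
  have hid : Tendsto (fun w : ℝ => w) (𝓝[>] a) (𝓝 a) := nhdsWithin_le_nhds
  refine ⟨fun y₀ _ => ?_, ?_, ?_⟩
  · simpa only [sub_eq_add_neg] using (tendsto_const_nhds.sub hid).div_atTop
      (tendsto_atTop_add_const_left _ (xiF μ σ x₀ a y₀) hnegξ)
  · simpa only [div_neg, neg_neg, neg_zero] using (hid.div_atTop hnegξ).neg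
  · exact (tendsto_sub_div_sub_of_deriv_tendsto_atTop hξ
      (tendsto_Mab_mul_sDen_atTop hx₀ hμcont hσcont hσpos hMfin hsa hμa hanat)).mono_left
      (inf_le_inf_left _ (principal_mono.2 fun q hq => hq.1))

theorem statement7    (a : ℝ) (b : EReal) (hab : (a : EReal) < b)
    (μ σ : ℝ → ℝ) (x₀ : ℝ) (hx₀ : x₀ ∈ stInt a b)
    (hμcont : ContinuousOn μ (stInt a b)) (hσcont : ContinuousOn σ (stInt a b))
    (hσpos : ∀ x ∈ stInt a b, 0 < (σ x) ^ 2)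
    (hMfin : ∀ x ∈ stInt a b, IntegrableOn (mDen μ σ x₀) (Set.Ioo a x))
    (hsa : Tendsto (sDen μ σ x₀) (𝓝[>] a) atTop)
    (μa : ℝ) (hμa : Tendsto μ (𝓝[>] a) (𝓝 μa))
    (hanat : Tendsto (xiF μ σ x₀ a) (𝓝[>] a) atBot)
    :
    (∀ y₀ ∈ stInt a b,
      Tendsto (fun w => (y₀ - w) / (xiF μ σ x₀ a y₀ - xiF μ σ x₀ a w)) (𝓝[>] a) (𝓝 0)) ∧
    Tendsto (fun w => w / xiF μ σ x₀ a w) (𝓝[>] a) (𝓝 0) ∧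
    Tendsto (fun q : ℝ × ℝ => (q.2 - q.1) / (xiF μ σ x₀ a q.2 - xiF μ σ x₀ a q.1))
      (((𝓝[>] a) ×ˢ (𝓝[>] a)) ⊓ 𝓟 {q : ℝ × ℝ | q.1 < q.2 ∧ (q.2 : EReal) < b}) (𝓝 0) :=
  statement7_general a b μ σ x₀ hx₀ hμcont hσcont hσpos hMfin hsa μa hμa hanat
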